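/- Under the aliasing identity and the cone conditions, the observable discrete coefficient sum is bounded above by the true coefficient sum: S̃_{ℓ,m}(f) ≤ [1 + ω̂(m−ℓ)ω̊(m−ℓ)] S_ℓ(f) for ℓ* ≤ ℓ ≤ m. Consequently, if m* := min{m' ≥ ℓ*+r : C(m')[1 + ω̂(r)ω̊(r)] S_{m'−r}(f) ≤ ε} with C(m) := ω̂(m)ω̊(r)/(1 − ω̂(r)ω̊(r)), then the adaptive algorithm stopping at the first m ≥ ℓ*+r with C(m) S̃_{m−r,m}(f) ≤ ε satisfies m ≤ m*. -/

import Mathlib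

/-!
Each discrete coefficient is the true one plus aliased terms of unimodular phase, so by the
triangle inequality `S̃_{ℓ,m} ≤ S_ℓ + Ŝ_{ℓ,m}`; the two cone conditions chained give
`Ŝ_{ℓ,m} ≤ ω̂(m−ℓ)ω̊(m−ℓ) S_ℓ`. Taking `ℓ = m* − r` shows that `m*` itself satisfies the
algorithm's stopping criterion, so the first index satisfying it is at most `m*`.
-/

theorem add_succ_mul_injective (k : ℕ) {N : ℕ} (hN : 0 < N) :
    Function.Injective fun n : ℕ => k + (n + 1) * N := by
  intro x y hxy
  have := Nat.eq_of_mul_eq_mul_right hN (Nat.add_left_cancel hxy)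
  omega

theorem norm_cexp_two_pi_I_mul_ofReal (t : ℝ) :
    ‖Complex.exp (2 * Real.pi * Complex.I * t)‖ = 1 := by
  rw [show (2 * Real.pi * Complex.I * t : ℂ) = ((2 * Real.pi * t : ℝ) : ℂ) * Complex.I by
    push_cast; ring]
  exact Complex.norm_exp_ofReal_mul_I _

theorem norm_add_tsum_mul_le {ι 𝕜 : Type*} [NormedDivisionRing 𝕜] (a : 𝕜) {x u : ι → 𝕜}
    (hx : Summable fun i => ‖x i‖) (hu : ∀ i, ‖u i‖ = 1) :
    ‖a + ∑' i, x i * u i‖ ≤ ‖a‖ + ∑' i, ‖x i‖ := by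
  have hxu : (fun i => ‖x i * u i‖) = fun i => ‖x i‖ := by
    funext i
    rw [norm_mul, hu, mul_one]
  calc ‖a + ∑' i, x i * u i‖ ≤ ‖a‖ + ‖∑' i, x i * u i‖ := norm_add_le _ _
    _ ≤ ‖a‖ + ∑' i, ‖x i‖ := by
      gcongr
      exact (norm_tsum_le_tsum_norm (hxu ▸ hx)).trans_eq (by rw [hxu])

theorem stmt19_general (b : ℕ) (hb : 2 ≤ b) (lstar : ℕ)
    (fhat : ℕ → ℂ) (ftil : ℕ → ℕ → ℂ) (θ : ℕ → ℕ → ℕ → ℝ)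
    (hsum : Summable fun κ : ℕ => ‖fhat κ‖)
    (halias : ∀ m κ : ℕ, ftil m κ = fhat κ +
      ∑' lam : ℕ, fhat (κ + (lam + 1) * b ^ m) *
        Complex.exp (2 * Real.pi * Complex.I * (θ m κ lam : ℝ)))
    (S : ℕ → ℝ) (Shat : ℕ → ℕ → ℝ) (Scheck : ℕ → ℝ) (Stil : ℕ → ℕ → ℝ)
    (hS : ∀ ℓ, S ℓ = ∑ κ ∈ Finset.Ico (b ^ ℓ / b) (b ^ ℓ), ‖fhat κ‖)
    (hShat : ∀ ℓ m, Shat ℓ m = ∑ κ ∈ Finset.Ico (b ^ ℓ / b) (b ^ ℓ),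
      ∑' lam : ℕ, ‖fhat (κ + (lam + 1) * b ^ m)‖)
    (hStil : ∀ ℓ m, Stil ℓ m = ∑ κ ∈ Finset.Ico (b ^ ℓ / b) (b ^ ℓ),
      ‖ftil m κ‖)
    (ωhat ωring : ℕ → ℝ)
    (hωhat : ∀ n, 0 ≤ ωhat n) (hωring : ∀ n, 0 ≤ ωring n)
    (hcone1 : ∀ ℓ m, ℓ ≤ m → Shat ℓ m ≤ ωhat (m - ℓ) * Scheck m)
    (hcone2 : ∀ ℓ m, lstar ≤ ℓ → ℓ ≤ m → Scheck m ≤ ωring (m - ℓ) * S ℓ)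
    (r : ℕ) (hr : ωhat r * ωring r < 1)
    (C : ℕ → ℝ) (hC : ∀ n, C n = ωhat n * ωring r / (1 - ωhat r * ωring r))
    (ε : ℝ) (mstar : ℕ) (hm1 : lstar + r ≤ mstar)
    (hm2 : C mstar * ((1 + ωhat r * ωring r) * S (mstar - r)) ≤ ε) :
    (∀ ℓ m, lstar ≤ ℓ → ℓ ≤ m →
        Stil ℓ m ≤ (1 + ωhat (m - ℓ) * ωring (m - ℓ)) * S ℓ) ∧
      sInf {m' : ℕ | lstar + r ≤ m' ∧ C m' * Stil (m' - r) m' ≤ ε} ≤ mstar := by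
  have aliasing : ∀ ℓ m, Stil ℓ m ≤ S ℓ + Shat ℓ m := by
    intro ℓ m
    rw [hStil, hS, hShat, ← Finset.sum_add_distrib]
    refine Finset.sum_le_sum fun κ _ => ?_
    rw [halias]
    exact norm_add_tsum_mul_le _
      (hsum.comp_injective (add_succ_mul_injective κ (pow_pos (by omega) m)))
      fun lam => norm_cexp_two_pi_I_mul_ofReal _
  have cone : ∀ ℓ m, lstar ≤ ℓ → ℓ ≤ m →
      Stil ℓ m ≤ (1 + ωhat (m - ℓ) * ωring (m - ℓ)) * S ℓ := by
    intro ℓ m hℓ hℓm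
    calc Stil ℓ m ≤ S ℓ + ωhat (m - ℓ) * Scheck m := by
          linarith [aliasing ℓ m, hcone1 ℓ m hℓm]
      _ ≤ S ℓ + ωhat (m - ℓ) * (ωring (m - ℓ) * S ℓ) := by
          gcongr
          exacts [hωhat _, hcone2 ℓ m hℓ hℓm]
      _ = (1 + ωhat (m - ℓ) * ωring (m - ℓ)) * S ℓ := by ring
  refine ⟨cone, Nat.sInf_le ⟨hm1, ?_⟩⟩
  have hC_nonneg : 0 ≤ C mstar := by
    rw [hC]
    exact div_nonneg (mul_nonneg (hωhat _) (hωring _)) (by linarith)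
  calc C mstar * Stil (mstar - r) mstar
      ≤ C mstar * ((1 + ωhat r * ωring r) * S (mstar - r)) := by
        gcongr
        simpa only [Nat.sub_sub_self (by omega : r ≤ mstar)] using
          cone (mstar - r) mstar (by omega) (by omega)
    _ ≤ ε := hm2

/-- Under the aliasing identity and the cone conditions, the observable
discrete coefficient sum is bounded by the true one:
S̃_{ℓ,m}(f) ≤ [1 + ω̂(m−ℓ)ω̊(m−ℓ)]·S_ℓ(f) for ℓ* ≤ ℓ ≤ m.  Consequently, with
C(m) := ω̂(m)ω̊(r)/(1 − ω̂(r)ω̊(r)) and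
m* := an element of {m' ≥ ℓ*+r : C(m')[1 + ω̂(r)ω̊(r)]S_{m'−r}(f) ≤ ε}, the adaptive
algorithm's stopping index min{m ≥ ℓ*+r : C(m)S̃_{m−r,m}(f) ≤ ε} satisfies m ≤ m*.
Notation as in the cone framework: f̂_κ true Fourier coefficients (absolutely summable),
f̃_{m,κ} = f̂_κ + ∑_{λ≥1} f̂_{κ+λb^m}e^{2πiθ_{m,κ,λ}} discrete coefficients,
S_ℓ = ∑_{κ=⌊b^{ℓ−1}⌋}^{b^ℓ−1}|f̂_κ|, S̃_{ℓ,m} = ∑_{κ=⌊b^{ℓ−1}⌋}^{b^ℓ−1}|f̃_{m,κ}|,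
Ŝ_{ℓ,m} = ∑_{κ=⌊b^{ℓ−1}⌋}^{b^ℓ−1}∑_{λ≥1}|f̂_{κ+λb^m}|, Š_m = ∑_{κ≥b^m}|f̂_κ|
(⌊b^{ℓ−1}⌋ = b^ℓ/b in ℕ-division); cone: Ŝ_{ℓ,m} ≤ ω̂(m−ℓ)Š_m for ℓ ≤ m and
Š_m ≤ ω̊(m−ℓ)S_ℓ for ℓ* ≤ ℓ ≤ m, with r fixed such that ω̂(r)ω̊(r) < 1. -/
theorem stmt19 (b : ℕ) (hb : 2 ≤ b) (lstar : ℕ) (hlstar : 1 ≤ lstar)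
    (fhat : ℕ → ℂ) (ftil : ℕ → ℕ → ℂ) (θ : ℕ → ℕ → ℕ → ℝ)
    (hsum : Summable fun κ : ℕ => ‖fhat κ‖)
    (halias : ∀ m κ : ℕ, ftil m κ = fhat κ +
      ∑' lam : ℕ, fhat (κ + (lam + 1) * b ^ m) *
        Complex.exp (2 * Real.pi * Complex.I * (θ m κ lam : ℝ)))
    (S : ℕ → ℝ) (Shat : ℕ → ℕ → ℝ) (Scheck : ℕ → ℝ) (Stil : ℕ → ℕ → ℝ)
    (hS : ∀ ℓ, S ℓ = ∑ κ ∈ Finset.Ico (b ^ ℓ / b) (b ^ ℓ), ‖fhat κ‖)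
    (hShat : ∀ ℓ m, Shat ℓ m = ∑ κ ∈ Finset.Ico (b ^ ℓ / b) (b ^ ℓ),
      ∑' lam : ℕ, ‖fhat (κ + (lam + 1) * b ^ m)‖)
    (hScheck : ∀ m, Scheck m = ∑' κ : ℕ, ‖fhat (κ + b ^ m)‖)
    (hStil : ∀ ℓ m, Stil ℓ m = ∑ κ ∈ Finset.Ico (b ^ ℓ / b) (b ^ ℓ),
      ‖ftil m κ‖)
    (ωhat ωring : ℕ → ℝ)
    (hωhat : ∀ n, 0 ≤ ωhat n) (hωring : ∀ n, 0 ≤ ωring n)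
    (hcone1 : ∀ ℓ m, ℓ ≤ m → Shat ℓ m ≤ ωhat (m - ℓ) * Scheck m)
    (hcone2 : ∀ ℓ m, lstar ≤ ℓ → ℓ ≤ m → Scheck m ≤ ωring (m - ℓ) * S ℓ)
    (r : ℕ) (hr1 : 1 ≤ r) (hr : ωhat r * ωring r < 1)
    (C : ℕ → ℝ) (hC : ∀ n, C n = ωhat n * ωring r / (1 - ωhat r * ωring r))
    (ε : ℝ) (mstar : ℕ) (hm1 : lstar + r ≤ mstar)
    (hm2 : C mstar * ((1 + ωhat r * ωring r) * S (mstar - r)) ≤ ε) :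
    (∀ ℓ m, lstar ≤ ℓ → ℓ ≤ m →
        Stil ℓ m ≤ (1 + ωhat (m - ℓ) * ωring (m - ℓ)) * S ℓ) ∧
      sInf {m' : ℕ | lstar + r ≤ m' ∧ C m' * Stil (m' - r) m' ≤ ε} ≤ mstar :=
  stmt19_general b hb lstar fhat ftil θ hsum halias S Shat Scheck Stil hS hShat hStil ωhat ωring
    hωhat hωring hcone1 hcone2 r hr C hC ε mstar hm1 hm2
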